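/- Every graph with maximum degree at most a+b+1 admits a vertex partition into two sets A and B such that the subgraph induced by A has maximum degree at most a and the subgraph induced by B has maximum degree at most b. -/
import Mathlib


open SimpleGraph Finset

section Aux

variable {V : Type*} [Fintype V] [DecidableEq V] (G : SimpleGraph V) [DecidableRel G.Adj]

/-- number of neighbors of `v` inside `A` -/
def dIn (A : Finset V) (v : V) : ℕ := (A.filter (G.Adj v)).card

lemma dIn_erase_self (A : Finset V) (v : V) : dIn G (A.erase v) v = dIn G A v := by
  unfold dIn
  rw [Finset.filter_erase, Finset.erase_eq_of_notMem]
  simp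

lemma dIn_insert_self (A : Finset V) (v : V) : dIn G (insert v A) v = dIn G A v := by
  unfold dIn
  rw [Finset.filter_insert]
  simp

lemma dIn_insert (A : Finset V) (v u : V) (hv : v ∉ A) (hu : u ≠ v) :
    dIn G (insert v A) u = dIn G A u + (if G.Adj u v then 1 else 0) := by
  unfold dIn
  rw [Finset.filter_insert]
  by_cases h : G.Adj u v
  · rw [if_pos h, if_pos h, Finset.card_insert_of_notMem (by simp [hv])]
  · rw [if_neg h, if_neg h, Nat.add_zero]

lemma sum_dIn_insert (A : Finset V) (v : V) (hv : v ∉ A) :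
    ∑ u ∈ insert v A, dIn G (insert v A) u = ∑ u ∈ A, dIn G A u + 2 * dIn G A v := by
  rw [Finset.sum_insert hv, dIn_insert_self]
  have h1 : ∑ u ∈ A, dIn G (insert v A) u
      = ∑ u ∈ A, (dIn G A u + (if G.Adj u v then 1 else 0)) := by
    apply Finset.sum_congr rfl
    intro u hu
    exact dIn_insert G A v u hv (fun h => hv (h ▸ hu))
  have h2 : ∑ u ∈ A, (if G.Adj u v then 1 else 0) = dIn G A v := by
    simp only [Finset.sum_boole, Nat.cast_id, dIn]
    congr 1
    exact Finset.filter_congr fun u _ => by rw [G.adj_comm]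
  rw [h1, Finset.sum_add_distrib, h2]
  ring

lemma sum_dIn_erase (A : Finset V) (v : V) (hv : v ∈ A) :
    ∑ u ∈ A, dIn G A u = ∑ u ∈ A.erase v, dIn G (A.erase v) u + 2 * dIn G (A.erase v) v := by
  have h := sum_dIn_insert G (A.erase v) v (Finset.notMem_erase v A)
  rw [Finset.insert_erase hv] at h
  exact h

lemma dIn_add_dIn_compl (A : Finset V) (v : V) :
    dIn G A v + dIn G Aᶜ v = G.degree v := by
  unfold dIn
  rw [← Finset.card_union_of_disjoint
    (Finset.disjoint_filter_filter disjoint_compl_right),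
    ← Finset.filter_union, Finset.union_compl]
  congr 1
  ext u
  simp [SimpleGraph.mem_neighborFinset]

/-- potential function -/
def pot (a b : ℕ) (A : Finset V) : ℕ :=
  (b + 1) * ∑ v ∈ A, dIn G A v + (a + 1) * ∑ v ∈ Aᶜ, dIn G Aᶜ v

lemma pot_erase (a b : ℕ) (A : Finset V) (v : V) (hv : v ∈ A) :
    pot G a b (A.erase v) + 2 * ((b + 1) * dIn G A v)
      = pot G a b A + 2 * ((a + 1) * dIn G Aᶜ v) := by
  have e1 := sum_dIn_erase G A v hv
  rw [dIn_erase_self] at e1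
  have hvc : v ∉ Aᶜ := by simp [hv]
  have e2 := sum_dIn_insert G Aᶜ v hvc
  have hc : (A.erase v)ᶜ = insert v Aᶜ := by
    ext u
    simp only [Finset.mem_compl, Finset.mem_erase, Finset.mem_insert]
    tauto
  unfold pot
  rw [hc, e2, e1]
  ring

lemma pot_insert (a b : ℕ) (A : Finset V) (v : V) (hv : v ∈ Aᶜ) :
    pot G a b (insert v A) + 2 * ((a + 1) * dIn G Aᶜ v)
      = pot G a b A + 2 * ((b + 1) * dIn G A v) := by
  have hvA : v ∉ A := by simpa using hv
  have e1 := sum_dIn_insert G A v hvA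
  have e2 := sum_dIn_erase G Aᶜ v hv
  rw [dIn_erase_self] at e2
  have hc : (insert v A)ᶜ = Aᶜ.erase v := by
    ext u
    simp only [Finset.mem_compl, Finset.mem_erase, Finset.mem_insert]
    tauto
  unfold pot
  rw [hc, e1, e2]
  ring

end Aux

theorem stmt2 {V : Type*} [Fintype V] (G : SimpleGraph V) [DecidableRel G.Adj]
    (a b : ℕ) (hdeg : ∀ v, G.degree v ≤ a + b + 1) :
    ∃ A : Set V, (∀ v ∈ A, {u ∈ A | G.Adj v u}.ncard ≤ a) ∧
      (∀ v ∈ Aᶜ, {u ∈ Aᶜ | G.Adj v u}.ncard ≤ b) := by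
  classical
  obtain ⟨A, -, hmin⟩ := Finset.exists_min_image (Finset.univ : Finset (Finset V))
    (pot G a b) ⟨∅, Finset.mem_univ ∅⟩
  refine ⟨↑A, ?_, ?_⟩
  · intro v hv
    have hvA : v ∈ A := hv
    have key : (b + 1) * dIn G A v ≤ (a + 1) * dIn G Aᶜ v := by
      have h := pot_erase G a b A v hvA
      have hle := hmin (A.erase v) (Finset.mem_univ _)
      omega
    have hsum := dIn_add_dIn_compl G A v
    have hdv := hdeg v
    have hset : {u ∈ (↑A : Set V) | G.Adj v u} = ↑(A.filter (G.Adj v)) := by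
      ext u; simp [and_comm]
    rw [hset, Set.ncard_coe_finset]
    show dIn G A v ≤ a
    by_contra hcon
    push_neg at hcon
    have h1 : dIn G Aᶜ v ≤ b := by omega
    nlinarith [key]
  · intro v hv
    have hvA : v ∈ Aᶜ := by
      simpa using hv
    have key : (a + 1) * dIn G Aᶜ v ≤ (b + 1) * dIn G A v := by
      have h := pot_insert G a b A v hvA
      have hle := hmin (insert v A) (Finset.mem_univ _)
      omega
    have hsum := dIn_add_dIn_compl G A v
    have hdv := hdeg v
    have hset : {u ∈ (↑A : Set V)ᶜ | G.Adj v u} = ↑(Aᶜ.filter (G.Adj v)) := by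
      ext u; simp [and_comm]
    rw [hset, Set.ncard_coe_finset]
    show dIn G Aᶜ v ≤ b
    by_contra hcon
    push_neg at hcon
    have h1 : dIn G A v ≤ a := by omega
    nlinarith [key]
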